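/- Let |N⟩ := (1/√6)(-|0⟩ + 2|1⟩ - |2⟩) in ℂ³ (the qutrit Norrell state), |+⟩ := (1/√3)(|0⟩+|1⟩+|2⟩), |xz'⟩ := (1/√3)(|0⟩ + e^{2πi/3}|1⟩ + |2⟩), and |xzz'⟩ := (1/√3)(|0⟩ + e^{-2πi/3}|1⟩ + |2⟩). Then |N⟩⟨N| + (1/2)|+⟩⟨+| = (1/2)(|1⟩⟨1| + |xz'⟩⟨xz'| + |xzz'⟩⟨xzz'|), and moreover |⟨N|xzz'⟩|² = 2/3. -/

import Mathlib

/-!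
With `ω = e^{2πi/3}`, a primitive cube root of unity, `e^{-2πi/3} = ω⁻¹ = ω̄`, every state is a
normalised vector with entries in `ℤ[ω]`. From `1 + ω + ω² = 0` we get `ω + ω⁻¹ = -1`, so the
phases cancel in the sum of the projectors onto `|xz'⟩` and `|xzz'⟩`, which is a real matrix;
after that the operator identity compares rational `3 × 3` matrices. The overlap is
`⟨N|xzz'⟩ = -2(1 - ω⁻¹)/√18`, and `|1 - ω⁻¹|² = 2 - (ω + ω⁻¹) = 3` gives `12/18 = 2/3`.
-/

open Matrix

/-- The qutrit Norrell state |N⟩ = (-|0⟩ + 2|1⟩ - |2⟩)/√6. -/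
noncomputable def norrell : Fin 3 → ℂ :=
  ![-((Real.sqrt 6 : ℝ) : ℂ)⁻¹, 2 * ((Real.sqrt 6 : ℝ) : ℂ)⁻¹, -((Real.sqrt 6 : ℝ) : ℂ)⁻¹]

/-- |+⟩ = (|0⟩ + |1⟩ + |2⟩)/√3. -/
noncomputable def plusState : Fin 3 → ℂ :=
  ![((Real.sqrt 3 : ℝ) : ℂ)⁻¹, ((Real.sqrt 3 : ℝ) : ℂ)⁻¹, ((Real.sqrt 3 : ℝ) : ℂ)⁻¹]

/-- |xz'⟩ = (|0⟩ + e^{2πi/3}|1⟩ + |2⟩)/√3. -/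
noncomputable def xzState : Fin 3 → ℂ :=
  ![((Real.sqrt 3 : ℝ) : ℂ)⁻¹,
    ((Real.sqrt 3 : ℝ) : ℂ)⁻¹ * Complex.exp (2 * Real.pi * Complex.I / 3),
    ((Real.sqrt 3 : ℝ) : ℂ)⁻¹]

/-- |xzz'⟩ = (|0⟩ + e^{-2πi/3}|1⟩ + |2⟩)/√3. -/
noncomputable def xzzState : Fin 3 → ℂ :=
  ![((Real.sqrt 3 : ℝ) : ℂ)⁻¹,
    ((Real.sqrt 3 : ℝ) : ℂ)⁻¹ * Complex.exp (-(2 * Real.pi * Complex.I / 3)),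
    ((Real.sqrt 3 : ℝ) : ℂ)⁻¹]

/-- |1⟩. -/
noncomputable def ket1 : Fin 3 → ℂ := ![0, 1, 0]

open Complex

lemma IsPrimitiveRoot.add_inv_eq_neg_one {K : Type*} [Field K] {ζ : K} (hζ : IsPrimitiveRoot ζ 3) :
    ζ + ζ⁻¹ = -1 := by
  have hgeom : ∑ i ∈ Finset.range 3, ζ ^ i = 0 := hζ.geom_sum_eq_zero (by norm_num)
  have hinv : ζ⁻¹ = ζ ^ 2 := inv_eq_of_mul_eq_one_right (by rw [← pow_succ', hζ.pow_eq_one])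
  simp only [Finset.sum_range_succ, Finset.sum_range_zero] at hgeom
  rw [hinv]
  linear_combination hgeom

lemma IsPrimitiveRoot.star_eq_inv {ζ : ℂ} {n : ℕ} (hζ : IsPrimitiveRoot ζ n) (hn : n ≠ 0) :
    star ζ = ζ⁻¹ :=
  (inv_eq_conj (hζ.norm'_eq_one hn)).symm

lemma IsPrimitiveRoot.norm_one_sub_sq {ζ : ℂ} (hζ : IsPrimitiveRoot ζ 3) : ‖1 - ζ‖ ^ 2 = 3 := by
  have hnormSq : ((‖1 - ζ‖ ^ 2 : ℝ) : ℂ) = (1 - ζ) * (1 - ζ⁻¹) := by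
    rw [Complex.sq_norm, ← mul_conj, map_sub, map_one, ← star_def, hζ.star_eq_inv (by norm_num)]
  have hexpand : (1 - ζ) * (1 - ζ⁻¹) = 3 := by
    linear_combination -hζ.add_inv_eq_neg_one + mul_inv_cancel₀ (hζ.ne_zero (by norm_num))
  exact_mod_cast hnormSq.trans hexpand

lemma IsPrimitiveRoot.vecMulVec_star_add_vecMulVec_star {ζ : ℂ} (hζ : IsPrimitiveRoot ζ 3) :
    vecMulVec ![1, ζ, 1] (star ![1, ζ, 1]) + vecMulVec ![1, ζ⁻¹, 1] (star ![1, ζ⁻¹, 1]) =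
      !![2, -1, 2; -1, 2, -1; 2, -1, 2] := by
  have hsum := hζ.add_inv_eq_neg_one
  have hstar := hζ.star_eq_inv (by norm_num)
  have hne : ζ ≠ 0 := hζ.ne_zero (by norm_num)
  ext i j
  simp only [Matrix.add_apply, vecMulVec_apply, Pi.star_apply]
  fin_cases i <;> fin_cases j <;>
    simp [hstar, hne, add_comm ζ⁻¹, hsum, one_add_one_eq_two]

lemma vecMulVec_smul_star_smul {𝕜 n : Type*} [RCLike 𝕜] (r : ℝ) (v : n → 𝕜) :
    vecMulVec (r • v) (star (r • v)) = (r ^ 2) • vecMulVec v (star v) := by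
  rw [star_smul, star_trivial, smul_vecMulVec, vecMulVec_smul, smul_smul, sq]

lemma isPrimitiveRoot_exp_two_pi_I_div_three : IsPrimitiveRoot (exp (2 * Real.pi * I / 3)) 3 := by
  exact_mod_cast isPrimitiveRoot_exp 3 (by norm_num)

lemma norrell_eq_smul : norrell = (√6)⁻¹ • ![(-1 : ℂ), 2, -1] := by
  ext i; fin_cases i <;> simp [norrell, real_smul, mul_comm]

lemma plusState_eq_smul : plusState = (√3)⁻¹ • ![(1 : ℂ), 1, 1] := by
  ext i; fin_cases i <;> simp [plusState, real_smul]

lemma xzState_eq_smul : xzState = (√3)⁻¹ • ![1, exp (2 * Real.pi * I / 3), 1] := by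
  ext i; fin_cases i <;> simp [xzState, real_smul]

lemma xzzState_eq_smul : xzzState = (√3)⁻¹ • ![1, (exp (2 * Real.pi * I / 3))⁻¹, 1] := by
  ext i; fin_cases i <;> simp [xzzState, real_smul, exp_neg]

lemma norrell_proj_add_half_plusState_proj :
    vecMulVec norrell (star norrell) + (1 / 2 : ℂ) • vecMulVec plusState (star plusState) =
      (1 / 2 : ℂ) • (vecMulVec ket1 (star ket1) + vecMulVec xzState (star xzState) +
        vecMulVec xzzState (star xzzState)) := by
  simp only [norrell_eq_smul, plusState_eq_smul, xzState_eq_smul, xzzState_eq_smul,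
    vecMulVec_smul_star_smul, add_assoc, ← smul_add,
    isPrimitiveRoot_exp_two_pi_I_div_three.vecMulVec_star_add_vecMulVec_star, inv_pow,
    Real.sq_sqrt (by norm_num : (0 : ℝ) ≤ 6), Real.sq_sqrt (by norm_num : (0 : ℝ) ≤ 3)]
  ext i j
  simp only [Matrix.add_apply, Matrix.smul_apply, vecMulVec_apply, Pi.star_apply]
  fin_cases i <;> fin_cases j <;> norm_num [ket1]

lemma norm_star_norrell_dotProduct_xzzState_sq : ‖star norrell ⬝ᵥ xzzState‖ ^ 2 = 2 / 3 := by
  have hdot (z : ℂ) : star ![(-1 : ℂ), 2, -1] ⬝ᵥ ![1, z, 1] = -2 * (1 - z) := by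
    simp only [dotProduct, Fin.sum_univ_three, Pi.star_apply, cons_val_zero, cons_val_one,
      cons_val_two, tail_cons, head_cons, star_neg, star_one, star_ofNat]
    ring
  rw [norrell_eq_smul, xzzState_eq_smul, star_smul, star_trivial, smul_dotProduct,
    dotProduct_smul, hdot]
  simp only [norm_smul, norm_mul, mul_pow, Real.norm_eq_abs, sq_abs, inv_pow,
    Real.sq_sqrt (by norm_num : (0 : ℝ) ≤ 6), Real.sq_sqrt (by norm_num : (0 : ℝ) ≤ 3)]
  rw [isPrimitiveRoot_exp_two_pi_I_div_three.inv.norm_one_sub_sq]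
  norm_num

/-- the operator identity
|N⟩⟨N| + (1/2)|+⟩⟨+| = (1/2)(|1⟩⟨1| + |xz'⟩⟨xz'| + |xzz'⟩⟨xzz'|),
and the overlap |⟨N|xzz'⟩|² = 2/3. -/
theorem norrell_state_decomposition :
    Matrix.vecMulVec norrell (star norrell) +
        ((1 / 2 : ℂ)) • Matrix.vecMulVec plusState (star plusState) =
      ((1 / 2 : ℂ)) • (Matrix.vecMulVec ket1 (star ket1) +
        Matrix.vecMulVec xzState (star xzState) +
        Matrix.vecMulVec xzzState (star xzzState)) ∧
      ‖dotProduct (star norrell) xzzState‖ ^ 2 = 2 / 3 :=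
  ⟨norrell_proj_add_half_plusState_proj, norm_star_norrell_dotProduct_xzzState_sq⟩
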